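/- arXiv:1408.1880 — 8 statements merged into one kernel-verified Lean document; each statement's English description precedes it below -/
import Mathlib

section
/- Let f ∈ ℝ[z] be a polynomial such that f(z₀) > 0 for every real number z₀. Then there exists a polynomial p ∈ ℂ[z] with no real roots such that f(z) = p(z) · conj(p)(z), where conj(p) denotes the polynomial obtained from p by conjugating all coefficients. Conversely, for any p ∈ ℂ[z] with no real roots, p · conj(p) is everywhere positive on ℝ. -/
/-!
For real `x`, `p(x) · conj(p)(x) = |p(x)|²`, which gives positivity. Conversely, a polynomial
positive on `ℝ` has only non-real roots; for such a root `z`, `f` is divisible by the real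
quadratic `(X - z)(X - z̄) = (X - z) · conj(X - z)`, and the quotient is again positive on `ℝ`.
Induction on the degree ends at a positive constant `a = √a · conj(√a)`.
-/

open Polynomial ComplexConjugate

namespace Polynomial

lemma ne_zero_of_eval_ne_zero {R : Type*} [Semiring R] {p : R[X]} {x : R}
    (h : p.eval x ≠ 0) : p ≠ 0 := by
  rintro rfl
  exact h eval_zero

lemma eval_ofReal_map_algebraMap (f : ℝ[X]) (x : ℝ) :
    (f.map (algebraMap ℝ ℂ)).eval (x : ℂ) = ((f.eval x : ℝ) : ℂ) := by
  rw [eval_map_algebraMap]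
  exact (ofReal_eval f x).symm

lemma eval_ofReal_mul_map_conj (p : ℂ[X]) (x : ℝ) :
    (p * p.map (starRingEnd ℂ)).eval (x : ℂ) = Complex.normSq (p.eval (x : ℂ)) := by
  rw [eval_mul, eval_map, ← Complex.conj_ofReal x, eval₂_hom, Complex.conj_ofReal,
    Complex.mul_conj]

lemma exists_aeval_eq_zero_im_ne_zero {f : ℝ[X]} (hf : ∀ x : ℝ, 0 < f.eval x)
    (hdeg : 0 < f.natDegree) : ∃ z : ℂ, aeval z f = 0 ∧ z.im ≠ 0 := by
  obtain ⟨z, hz⟩ :=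
    IsAlgClosed.exists_aeval_eq_zero ℂ f (natDegree_pos_iff_degree_pos.mp hdeg).ne'
  refine ⟨z, hz, fun him => (hf z.re).ne' ?_⟩
  have hre : ((z.re : ℝ) : ℂ) = z := Complex.ext rfl him.symm
  exact Complex.ofReal_eq_zero.mp ((ofReal_eval f z.re).trans (hre ▸ hz))

end Polynomial

def IsNormSq (f : ℝ[X]) : Prop :=
  ∃ p : ℂ[X], (∀ x : ℝ, p.eval (x : ℂ) ≠ 0) ∧
    f.map (algebraMap ℝ ℂ) = p * p.map (starRingEnd ℂ)

namespace IsNormSq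

lemma eval_pos {f : ℝ[X]} (hf : IsNormSq f) (x : ℝ) : 0 < f.eval x := by
  obtain ⟨p, hp, hfp⟩ := hf
  have h : ((f.eval x : ℝ) : ℂ) = Complex.normSq (p.eval (x : ℂ)) := by
    rw [← eval_ofReal_map_algebraMap, hfp, eval_ofReal_mul_map_conj]
  exact (Complex.ofReal_inj.mp h) ▸ Complex.normSq_pos.mpr (hp x)

lemma mul {f g : ℝ[X]} (hf : IsNormSq f) (hg : IsNormSq g) : IsNormSq (f * g) := by
  obtain ⟨p, hp, hfp⟩ := hf
  obtain ⟨q, hq, hgq⟩ := hg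
  refine ⟨p * q, fun x => by simpa [eval_mul] using ⟨hp x, hq x⟩, ?_⟩
  rw [Polynomial.map_mul, Polynomial.map_mul, hfp, hgq]
  ring

end IsNormSq

lemma isNormSq_C {a : ℝ} (ha : 0 < a) : IsNormSq (C a) := by
  refine ⟨C (√a : ℂ), fun x => by simpa using (Real.sqrt_pos.mpr ha).ne', ?_⟩
  rw [Polynomial.map_C, Polynomial.map_C, Complex.conj_ofReal, ← C_mul, ← Complex.ofReal_mul,
    Real.mul_self_sqrt ha.le, Complex.coe_algebraMap]

lemma isNormSq_quadratic {z : ℂ} (hz : z.im ≠ 0) :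
    IsNormSq (X ^ 2 - C (2 * z.re) * X + C (‖z‖ ^ 2)) := by
  refine ⟨X - C z, fun x h => hz ?_, ?_⟩
  · rw [eval_sub, eval_X, eval_C, sub_eq_zero] at h
    rw [← h, Complex.ofReal_im]
  · have hre : ((2 * z.re : ℝ) : ℂ) = z + conj z := by simp [Complex.add_conj]
    have hnorm : ((‖z‖ ^ 2 : ℝ) : ℂ) = z * conj z := by simp [Complex.mul_conj']
    simp only [Polynomial.map_add, Polynomial.map_sub, Polynomial.map_mul, Polynomial.map_pow,
      map_X, map_C, Complex.coe_algebraMap, hre, hnorm]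
    simp only [map_add, map_mul]
    ring

theorem isNormSq_of_forall_eval_pos {f : ℝ[X]} (hf : ∀ x : ℝ, 0 < f.eval x) : IsNormSq f := by
  induction hn : f.natDegree using Nat.strong_induction_on generalizing f with
  | _ n ih =>
  rcases Nat.eq_zero_or_pos n with hn0 | hn0
  · rw [eq_C_of_natDegree_eq_zero (hn.trans hn0)]
    exact isNormSq_C (by simpa [coeff_zero_eq_eval_zero] using hf 0)
  · obtain ⟨z, hz, him⟩ := exists_aeval_eq_zero_im_ne_zero hf (hn ▸ hn0)
    obtain ⟨g, rfl⟩ := f.quadratic_dvd_of_aeval_eq_zero_im_ne_zero hz him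
    have hQ := isNormSq_quadratic him
    have hg (x : ℝ) : 0 < g.eval x := by
      have hfx := hf x
      rw [eval_mul] at hfx
      exact pos_of_mul_pos_right hfx (hQ.eval_pos x).le
    have hdeg : g.natDegree < n := by
      have hQdeg : (X ^ 2 - C (2 * z.re) * X + C (‖z‖ ^ 2)).natDegree = 2 := by
        compute_degree!
      rw [← hn, natDegree_mul (ne_zero_of_eval_ne_zero (hQ.eval_pos 0).ne')
        (ne_zero_of_eval_ne_zero (hg 0).ne'), hQdeg]
      omega
    exact hQ.mul (ih _ hdeg hg rfl)

/-- A real polynomial is strictly positive at every real point iff it is the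
"norm" `p * conj p` of a complex polynomial `p` with no real roots. -/
theorem stmt_0 (f : Polynomial ℝ) :
    (∀ x : ℝ, 0 < f.eval x) ↔
      ∃ p : Polynomial ℂ, (∀ x : ℝ, p.eval (x : ℂ) ≠ 0) ∧
        f.map (algebraMap ℝ ℂ) = p * p.map (starRingEnd ℂ) :=
  ⟨isNormSq_of_forall_eval_pos, IsNormSq.eval_pos⟩
end

section
/- Let f ∈ ℝ[z] be a polynomial of degree two with f(z₀) > 0 for all real z₀. Then there exist a polynomial a ∈ ℝ[z] and a positive real number c such that f(z) = a(z)² + c·(z² − 1). -/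
open Polynomial

/-- A degree-two real polynomial that is strictly positive at every real point
can be written as `a(z)² + c·(z² − 1)` with `a ∈ ℝ[z]` and `c > 0`. -/
theorem stmt_1 (f : Polynomial ℝ) (hdeg : f.natDegree = 2)
    (hpos : ∀ x : ℝ, 0 < f.eval x) :
    ∃ (a : Polynomial ℝ) (c : ℝ), 0 < c ∧ f = a ^ 2 + C c * (X ^ 2 - 1) := by
  set α := f.coeff 2 with hαdef
  set β := f.coeff 1 with hβdef
  set γ := f.coeff 0 with hγdef
  have hf0 : f ≠ 0 := by
    intro h; have := hpos 0; rw [h] at this; simp at this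
  have hα : α ≠ 0 := by
    have h := leadingCoeff_ne_zero.mpr hf0
    rwa [leadingCoeff, hdeg] at h
  have hf : f = C α * X ^ 2 + C β * X + C γ := by
    rw [f.as_sum_range' 3 (by rw [hdeg]; omega)]
    simp [Finset.sum_range_succ, ← C_mul_X_pow_eq_monomial]
    ring
  have heval : ∀ x : ℝ, f.eval x = α * (x * x) + β * x + γ := by
    intro x; rw [hf]; simp only [eval_add, eval_mul, eval_pow, eval_C, eval_X]; ring
  have hdis : discrim α β γ < 0 :=
    discrim_lt_zero hα (fun x => by rw [← heval]; exact hpos x)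
  rw [discrim] at hdis
  have hγpos : 0 < γ := by have h := hpos 0; rw [heval 0] at h; linarith
  have hαpos : 0 < α := by nlinarith
  set s := Real.sqrt ((α + γ) ^ 2 - β ^ 2) with hsdef
  have hs2 : s ^ 2 = (α + γ) ^ 2 - β ^ 2 := Real.sq_sqrt (by nlinarith [sq_nonneg (α - γ)])
  have hs0 : 0 ≤ s := Real.sqrt_nonneg _
  have hslt : s ≤ α + γ := by nlinarith [sq_nonneg β]
  have hsgt : γ - α < s := by nlinarith [sq_nonneg (γ - α), sq_nonneg s]
  set c := ((α - γ) + s) / 2 with hcdef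
  have hc : 0 < c := by rw [hcdef]; linarith
  have hp2 : 0 ≤ α - c := by rw [hcdef]; linarith
  have hq2 : 0 ≤ γ + c := by rw [hcdef]; linarith
  set p := Real.sqrt (α - c) with hpdef
  set q0 := Real.sqrt (γ + c) with hq0def
  have hpsq : p ^ 2 = α - c := Real.sq_sqrt hp2
  have hq0sq : q0 ^ 2 = γ + c := Real.sq_sqrt hq2
  have hprod : (2 * p * q0) ^ 2 = β ^ 2 := by
    have : (2 * p * q0) ^ 2 = 4 * (p ^ 2) * (q0 ^ 2) := by ring
    rw [this, hpsq, hq0sq, hcdef]; nlinarith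
  have hprodnn : 0 ≤ 2 * p * q0 := by positivity
  have habs : 2 * p * q0 = |β| := by
    rw [← Real.sqrt_sq hprodnn, hprod, Real.sqrt_sq_eq_abs]
  set q : ℝ := if 0 ≤ β then q0 else -q0 with hqdef
  have hq : 2 * p * q = β := by
    rw [hqdef]; split_ifs with h
    · rw [habs.trans (abs_of_nonneg h)]
    · have : 2 * p * -q0 = -(2*p*q0) := by ring
      rw [this, habs, abs_of_neg (not_le.mp h)]; ring
  have hqsq : q ^ 2 = γ + c := by
    rw [hqdef]; split_ifs <;> simpa using hq0sq
  refine ⟨C p * X + C q, c, hc, ?_⟩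
  have h1 : α = p ^ 2 + c := by rw [hpsq]; ring
  have h3 : γ = q ^ 2 - c := by rw [hqsq]; ring
  rw [hf, h1, h3, ← hq]
  simp only [C_add, C_sub, C_mul, C_pow, map_ofNat]
  ring
end

section
/- Let V = { a² + P·(z² − 1) : a ∈ ℝ[z], P ∈ ℝ[z]₊ } where ℝ[z]₊ denotes the real polynomials that are strictly positive at every real point. Then V ∩ ℝ[z]₊ is closed under multiplication: if f, g ∈ V ∩ ℝ[z]₊ then f·g ∈ V ∩ ℝ[z]₊. -/
open Polynomial

/-- The set `V ∩ ℝ[z]₊`, where `V = {a² + P·(z²−1) : a ∈ ℝ[z], P ∈ ℝ[z]₊}` and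
`ℝ[z]₊` is the set of real polynomials strictly positive at every real point,
is closed under multiplication. -/
theorem stmt_2 (f g : Polynomial ℝ)
    (hf : ∃ a P : Polynomial ℝ, (∀ x : ℝ, 0 < P.eval x) ∧
      f = a ^ 2 + P * (X ^ 2 - 1))
    (hfpos : ∀ x : ℝ, 0 < f.eval x)
    (hg : ∃ a P : Polynomial ℝ, (∀ x : ℝ, 0 < P.eval x) ∧
      g = a ^ 2 + P * (X ^ 2 - 1))
    (hgpos : ∀ x : ℝ, 0 < g.eval x) :
    (∃ a P : Polynomial ℝ, (∀ x : ℝ, 0 < P.eval x) ∧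
      f * g = a ^ 2 + P * (X ^ 2 - 1)) ∧ (∀ x : ℝ, 0 < (f * g).eval x) := by
  obtain ⟨a, P, hP, hfe⟩ := hf
  obtain ⟨b, Q, hQ, hge⟩ := hg
  constructor
  · refine ⟨a * b, Q * f + P * b ^ 2, ?_, ?_⟩
    · intro x
      simp only [eval_add, eval_mul, eval_pow]
      have := mul_pos (hQ x) (hfpos x)
      nlinarith [sq_nonneg (b.eval x), (hP x)]
    · rw [hfe, hge]; ring
  · intro x
    simp only [eval_mul]
    exact mul_pos (hfpos x) (hgpos x)
end

section
/- Every element f of the subfield ℂ(z²) of ℂ(z) can be written as f(z) = g(z)·g(−z) for some g ∈ ℂ(z). Consequently ℂ(z²) = { g(z)·g(−z) : g ∈ ℂ(z) } as sets (restricting to nonzero elements on both sides). -/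
/-!
Over an algebraically closed field every polynomial is a constant times linear factors `X - a`,
and the identities `x² - s² = (i (x - s)) (i (-x - s))` (with `i² = -1`) and
`(x - a) (-x - a) = a² - x²` show that `p(x²)` is a norm `g · η g` and that `p(x) · η (p(x))`
lies in `k(x²)`. Both properties pass to quotients, and `k(x²)`, `k(x)` consist of quotients
of such polynomial expressions.
-/

open Polynomial IntermediateField

section Norm

variable {M F : Type*} [CommMonoidWithZero M] [FunLike F M M] [MonoidWithZeroHomClass F M M]

/-- For an involution `σ` this is the norm from `M` to the fixed points of `σ`. -/
def normMap (σ : F) : M →*₀ M where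
  toFun g := g * σ g
  map_zero' := by simp
  map_one' := by simp
  map_mul' g h := by
    change g * h * σ (g * h) = g * σ g * (h * σ h)
    rw [map_mul, mul_mul_mul_comm]

@[simp]
theorem normMap_apply (σ : F) (g : M) : normMap σ g = g * σ g := rfl

end Norm

theorem Polynomial.mem_of_C_mem_of_X_sub_C_mem {k : Type*} [Field k] [IsAlgClosed k]
    (S : Submonoid k[X]) (hC : ∀ c, C c ∈ S) (hX : ∀ a, X - C a ∈ S) (p : k[X]) : p ∈ S := by
  rw [← C_leadingCoeff_mul_prod_multiset_X_sub_C (p := p) IsAlgClosed.card_roots_eq_natDegree]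
  refine mul_mem (hC _) (multiset_prod_mem _ fun q hq => ?_)
  obtain ⟨a, -, rfl⟩ := Multiset.mem_map.mp hq
  exact hX a

section

variable {k L F : Type*} [Field k] [IsAlgClosed k] [Field L] [Algebra k L]
  [FunLike F L L] [AlgHomClass F k L L] {η : F} {x : L}

theorem aeval_sq_mem_mrange_normMap (hη : η x = -x) (p : k[X]) :
    aeval (x ^ 2) p ∈ MonoidHom.mrange (normMap η) := by
  refine mem_of_C_mem_of_X_sub_C_mem ((MonoidHom.mrange (normMap η)).comap (aeval (x ^ 2)))
    (fun c => ?_) (fun a => ?_) p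
  · obtain ⟨t, rfl⟩ := IsAlgClosed.exists_pow_nat_eq c two_pos
    exact ⟨algebraMap k L t, by simp [pow_two, AlgHomClass.commutes]⟩
  · obtain ⟨s, rfl⟩ := IsAlgClosed.exists_pow_nat_eq a two_pos
    obtain ⟨i, hi⟩ := IsAlgClosed.exists_pow_nat_eq (-1 : k) two_pos
    refine ⟨algebraMap k L i * (x - algebraMap k L s), ?_⟩
    have hi' : algebraMap k L i ^ 2 = -1 := by rw [← map_pow, hi, map_neg, map_one]
    simp only [normMap_apply, map_mul, map_sub, AlgHomClass.commutes,
      hη, map_pow, aeval_X, aeval_C]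
    linear_combination (algebraMap k L s ^ 2 - x ^ 2) * hi'

theorem mem_mrange_normMap_of_mem_adjoin_sq (hη : η x = -x) {f : L}
    (hf : f ∈ adjoin k {x ^ 2}) : f ∈ MonoidHom.mrange (normMap η) := by
  obtain ⟨r, s, rfl⟩ := (mem_adjoin_simple_iff k f).mp hf
  obtain ⟨g, hg⟩ := aeval_sq_mem_mrange_normMap hη r
  obtain ⟨h, hh⟩ := aeval_sq_mem_mrange_normMap hη s
  exact ⟨g / h, by rw [map_div₀, hg, hh]⟩

theorem normMap_aeval_mem_adjoin_sq (hη : η x = -x) (p : k[X]) :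
    normMap η (aeval x p) ∈ adjoin k {x ^ 2} := by
  refine mem_of_C_mem_of_X_sub_C_mem
    (((adjoin k {x ^ 2}).toSubmonoid.comap (normMap η)).comap (aeval x))
    (fun c => ?_) (fun a => ?_) p
  · simp only [Submonoid.mem_comap, aeval_C, normMap_apply, AlgHomClass.commutes, ← map_mul]
    exact algebraMap_mem _ _
  · have hx2 : x ^ 2 ∈ adjoin k {x ^ 2} := mem_adjoin_simple_self k _
    have : (x - algebraMap k L a) * (-x - algebraMap k L a) = algebraMap k L (a ^ 2) - x ^ 2 := by
      rw [map_pow]; ring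
    simp only [Submonoid.mem_comap, map_sub, aeval_X, aeval_C, normMap_apply, hη,
      AlgHomClass.commutes, this,
      Subsemiring.mem_toSubmonoid, Subalgebra.mem_toSubsemiring, mem_toSubalgebra]
    exact sub_mem ((adjoin k {x ^ 2}).algebraMap_mem _) hx2

theorem normMap_mem_adjoin_sq (hη : η x = -x) {g : L} (hg : g ∈ adjoin k {x}) :
    normMap η g ∈ adjoin k {x ^ 2} := by
  obtain ⟨r, s, rfl⟩ := (mem_adjoin_simple_iff k g).mp hg
  rw [map_div₀]
  exact div_mem (normMap_aeval_mem_adjoin_sq hη r) (normMap_aeval_mem_adjoin_sq hη s)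

end

/-- Let `η` be the `ℂ`-algebra automorphism of `ℂ(z)` with `η(z) = −z`.
An element `f ∈ ℂ(z)` lies in the subfield `ℂ(z²)` if and only if
`f = g(z)·g(−z)` for some `g ∈ ℂ(z)`. -/
theorem stmt_4 (η : RatFunc ℂ →ₐ[ℂ] RatFunc ℂ) (hη : η RatFunc.X = -RatFunc.X)
    (f : RatFunc ℂ) :
    f ∈ IntermediateField.adjoin ℂ ({RatFunc.X ^ 2} : Set (RatFunc ℂ)) ↔
      ∃ g : RatFunc ℂ, f = g * η g := by
  refine ⟨fun hf => ?_, ?_⟩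
  · obtain ⟨g, hg⟩ := mem_mrange_normMap_of_mem_adjoin_sq hη hf
    exact ⟨g, hg.symm⟩
  · rintro ⟨g, rfl⟩
    have hg : g ∈ adjoin ℂ {RatFunc.X} := by rw [RatFunc.adjoin_X]; trivial
    exact normMap_mem_adjoin_sq hη hg
end

section
/- Let K be a field and p, p' ∈ K*. The classes of the matrices [[0, p], [1, 0]] and [[0, p'], [1, 0]] are conjugate in PGL(2, K) if and only if p/p' is a square in K*. -/
/-!
Scalar matrices in `GL n R` have determinant an `n`-th power, so the determinant modulo `n`-th
powers of units is a homomorphism on `PGL(n, R)` into an abelian group, hence a conjugacy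
invariant. For `n = 2` the determinants `-p` and `-p'` must therefore differ by a square.
Conversely, conjugating `!![0, p; 1, 0]` by `diag(s, 1)` gives `s⁻¹ • !![0, s ^ 2 * p; 1, 0]`.
-/

open scoped MatrixGroups
open Matrix

namespace Matrix.ProjGenLinGroup

variable (n R : Type*) [Fintype n] [DecidableEq n] [CommRing R]

def detModPow : PGL(n, R) →* Rˣ ⧸ (powMonoidHom (Fintype.card n) : Rˣ →* Rˣ).range :=
  lift ((QuotientGroup.mk' _).comp GeneralLinearGroup.det) <| MonoidHom.ext fun u => by
    rw [MonoidHom.comp_apply, MonoidHom.comp_apply, GeneralLinearGroup.det_scalar]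
    exact (QuotientGroup.eq_one_iff _).mpr ⟨u, rfl⟩

variable {n R}

theorem exists_det_eq_pow_mul_det_of_isConj {g h : GL n R} (hgh : IsConj (mk g) (mk h)) :
    ∃ u : Rˣ, h.det = u ^ Fintype.card n * g.det := by
  have hdet := (isConj_iff_eq (α := Rˣ ⧸ (powMonoidHom (Fintype.card n) : Rˣ →* Rˣ).range)).mp
    ((detModPow n R).map_isConj hgh)
  simp only [detModPow, lift_mk, MonoidHom.comp_apply, QuotientGroup.mk'_apply, QuotientGroup.eq,
    MonoidHom.mem_range, powMonoidHom_apply] at hdet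
  obtain ⟨u, hu⟩ := hdet
  exact ⟨u, by rw [hu, mul_comm, mul_inv_cancel_left]⟩

theorem isConj_mk_antidiag_sq_mul (s : Rˣ) {p : R}
    {M M' : GL (Fin 2) R} (hM : (M : Matrix (Fin 2) (Fin 2) R) = !![0, p; 1, 0])
    (hM' : (M' : Matrix (Fin 2) (Fin 2) R) = !![0, s ^ 2 * p; 1, 0]) :
    IsConj (mk M) (mk M') := by
  let D : GL (Fin 2) R := GeneralLinearGroup.mk'' !![(s : R), 0; 0, 1] (by simp [det_fin_two])
  have hDM : D * M * GeneralLinearGroup.scalar (Fin 2) s = M' * D := by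
    refine Units.ext ?_
    simp only [Units.val_mul, GeneralLinearGroup.coe_scalar, hM, hM', D,
      GeneralLinearGroup.mk'', Matrix.nonsingInvUnit]
    ext i j
    fin_cases i <;> fin_cases j <;> simp [Matrix.mul_apply, Fin.sum_univ_two, sq, mul_right_comm]
  refine isConj_iff.mpr ⟨mk D, ?_⟩
  rw [← map_inv, ← map_mul, ← map_mul, mk_eq_mk_iff]
  refine ⟨s, ?_⟩
  rw [mul_assoc _ D⁻¹, ← GeneralLinearGroup.scalar_commute, ← mul_assoc, hDM, mul_inv_cancel_right]

end Matrix.ProjGenLinGroup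

open Matrix.ProjGenLinGroup in
/-- For `p, p' ∈ K*`, the classes of `[[0, p], [1, 0]]` and `[[0, p'], [1, 0]]`
are conjugate in `PGL(2, K)` if and only if `p/p'` is a square in `K*`. -/
theorem stmt_8 (K : Type*) [Field K] (p p' : K) (hp : p ≠ 0) (hp' : p' ≠ 0)
    (M M' : GL (Fin 2) K)
    (hM : (M : Matrix (Fin 2) (Fin 2) K) = !![0, p; 1, 0])
    (hM' : (M' : Matrix (Fin 2) (Fin 2) K) = !![0, p'; 1, 0]) :
    IsConj (QuotientGroup.mk M : GL (Fin 2) K ⧸ Subgroup.center (GL (Fin 2) K))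
        (QuotientGroup.mk M') ↔
      ∃ s : K, p / p' = s ^ 2 := by
  constructor
  · intro hconj
    obtain ⟨u, hu⟩ := exists_det_eq_pow_mul_det_of_isConj (g := M) (h := M') hconj
    have hp'_eq : p' = (u : K) ^ 2 * p := by
      simpa [hM, hM', det_fin_two] using congrArg Units.val hu
    exact ⟨(u : K)⁻¹, by rw [hp'_eq]; field_simp⟩
  · rintro ⟨s, hs⟩
    have hs0 : s ≠ 0 := by
      rintro rfl
      simp_all
    refine (isConj_mk_antidiag_sq_mul (Units.mk0 s hs0) hM' ?_).symm
    rw [hM, Units.val_mk0, ← hs, div_mul_cancel₀ p hp']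
end

section
/- Let A ∈ GL(2, ℂ) satisfy A·conj(A) = −I, where conj(A) is the entrywise complex conjugate. Then there exists B ∈ GL(2, ℂ) such that B⁻¹·A·conj(B) = [[0, −1], [1, 0]]. -/
lemma stmt_13_aux (A B : Matrix (Fin 2) (Fin 2) ℂ) (hB : IsUnit B.det)
    (key : A * B.map (starRingEnd ℂ) = B * !![0, -1; 1, 0]) :
    B⁻¹ * A * B.map (starRingEnd ℂ) = !![0, -1; 1, 0] := by
  rw [mul_assoc, key, ← mul_assoc, Matrix.nonsing_inv_mul _ hB, one_mul]

/-- If `A ∈ GL(2, ℂ)` satisfies `A·conj(A) = −I`, where `conj` is entrywise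
complex conjugation, then there is `B ∈ GL(2, ℂ)` with
`B⁻¹·A·conj(B) = [[0, −1], [1, 0]]`. -/
theorem stmt_13 (A : Matrix (Fin 2) (Fin 2) ℂ) (hA : IsUnit A)
    (h : A * A.map (starRingEnd ℂ) = -(1 : Matrix (Fin 2) (Fin 2) ℂ)) :
    ∃ B : Matrix (Fin 2) (Fin 2) ℂ, IsUnit B ∧
      B⁻¹ * A * B.map (starRingEnd ℂ) = !![0, -1; 1, 0] := by
  have h00 := congrFun (congrFun h 0) 0
  have h10 := congrFun (congrFun h 1) 0
  have h01 := congrFun (congrFun h 0) 1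
  have h11 := congrFun (congrFun h 1) 1
  simp [Matrix.mul_apply, Fin.sum_univ_two, Matrix.map_apply, Matrix.one_apply] at h00 h10 h01 h11
  by_cases hc : A 1 0 = 0
  · by_cases hb : A 0 1 = 0
    · exfalso
      rw [hc, map_zero, mul_zero, add_zero, Complex.mul_conj] at h00
      have := congrArg Complex.re h00
      simp at this
      nlinarith [Complex.normSq_nonneg (A 0 0), this]
    · refine ⟨!![0, A 0 1; 1, A 1 1], ?_, ?_⟩
      · rw [Matrix.isUnit_iff_isUnit_det]
        simp [Matrix.det_fin_two, hb]
      · apply stmt_13_aux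
        · simp [Matrix.det_fin_two, hb]
        · ext i j
          fin_cases i <;> fin_cases j <;>
            simp [Matrix.mul_apply, Fin.sum_univ_two, Matrix.map_apply]
          · linear_combination h01
          · linear_combination h11
  · refine ⟨!![1, A 0 0; 0, A 1 0], ?_, ?_⟩
    · rw [Matrix.isUnit_iff_isUnit_det]
      simp [Matrix.det_fin_two, hc]
    · apply stmt_13_aux
      · simp [Matrix.det_fin_two, hc]
      · ext i j
        fin_cases i <;> fin_cases j <;>
          simp [Matrix.mul_apply, Fin.sum_univ_two, Matrix.map_apply]
        · linear_combination h00
        · linear_combination h10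
end

section
/- Let D be a division ring and η : D → D a ring automorphism with η∘η = id and η ≠ id. Suppose A ∈ D* satisfies A·η(A) = 1. Then there exists B ∈ D* with A = B·η(B)⁻¹. -/
/-- Noncommutative Hilbert 90 for an involution: if `D` is a division ring and
`η` a ring automorphism of `D` with `η² = id`, `η ≠ id`, and `A ∈ D*` satisfies
`A·η(A) = 1`, then `A = B·η(B)⁻¹` for some `B ∈ D*`. -/
theorem stmt_14 (D : Type*) [DivisionRing D] (η : D ≃+* D)
    (hη2 : ∀ x, η (η x) = x) (hη : η ≠ RingEquiv.refl D)
    (A : D) (hA : A ≠ 0) (h : A * η A = 1) :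
    ∃ B : D, B ≠ 0 ∧ A = B * (η B)⁻¹ := by
  -- key step: if C + A * η C ≠ 0, take B = C + A * η C
  have key : ∀ C : D, C + A * η C ≠ 0 → ∃ B : D, B ≠ 0 ∧ A = B * (η B)⁻¹ := by
    intro C hB
    refine ⟨C + A * η C, hB, ?_⟩
    have hηB : η (C + A * η C) = η C + η A * C := by
      rw [map_add, map_mul, hη2]
    have hAB : A * η (C + A * η C) = C + A * η C := by
      rw [hηB, mul_add, ← mul_assoc, h, one_mul, add_comm]
    have hηBne : η (C + A * η C) ≠ 0 := by
      simpa using (map_ne_zero_iff η.toRingHom η.injective).mpr hB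
    rw [eq_mul_inv_iff_mul_eq₀ hηBne]
    exact hAB
  by_cases hA1 : A = -1
  · obtain ⟨C, hC⟩ : ∃ C : D, η C ≠ C := by
      by_contra hc
      push_neg at hc
      exact hη (RingEquiv.ext fun x => hc x)
    refine key C ?_
    rw [hA1]
    intro hz
    rw [neg_one_mul, ← sub_eq_add_neg, sub_eq_zero] at hz
    exact hC hz.symm
  · refine key 1 ?_
    rw [map_one, mul_one]
    intro hz
    exact hA1 (eq_neg_of_add_eq_zero_right hz)
end

section
/- Let g ∈ GL(4, ℤ) be an element of prime order p ≥ 3 that fixes a nonzero vector. Then p = 3, and the characteristic polynomial of g equals (x − 1)²·(x² + x + 1); in particular the fixed subspace of g in ℚ⁴ has dimension 2. -/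
/-!
Over `ℚ`, the minimal polynomial of `g` divides `X ^ p - 1 = (X - 1) Φ_p`; since `g ≠ 1` and
`Φ_p` is irreducible, `Φ_p` divides it, and a fixed vector makes `X - 1` a factor of the
characteristic polynomial too. So `X ^ p - 1` divides the quartic characteristic polynomial,
forcing `p = 3`; the remaining linear factor is `X - 1` because `det g` is a cube root of unity
in `ℚ`. For the fixed space, `ℚ⁴ = ker (g - 1) ⊕ ker (g² + g + 1)`. Both summands are nonzero,
and the second is even-dimensional since on it `(2g + 1)² = -3`, whose determinant `(-3) ^ dim`
is a square.
-/

open Polynomial Module LinearMap Matrix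

namespace Module.End

section OrderedField

variable {K V : Type*} [Field K] [LinearOrder K] [IsStrictOrderedRing K] [AddCommGroup V]
  [Module K V] [FiniteDimensional K V]

theorem even_finrank_of_sq_add_self_add_one_eq_zero {J : End K V} (hJ : J ^ 2 + J + 1 = 0) :
    Even (finrank K V) := by
  have hsq : ((2 : K) • J + 1) ^ 2 = (-3 : K) • 1 := by
    calc ((2 : K) • J + 1) ^ 2 = (4 : K) • (J ^ 2 + J + 1) + (-3 : K) • 1 := by
          simp only [pow_two, add_mul, mul_add, smul_mul_assoc, mul_smul_comm, one_mul, mul_one]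
          module
      _ = (-3 : K) • 1 := by rw [hJ, smul_zero, zero_add]
  have hdet : LinearMap.det ((2 : K) • J + 1) ^ 2 = (-3 : K) ^ finrank K V := by
    rw [← map_pow, hsq, LinearMap.det_smul, map_one, mul_one]
  by_contra hodd
  have hneg := (Nat.not_even_iff_odd.1 hodd).pow_neg (show (-3 : K) < 0 by norm_num)
  nlinarith [sq_nonneg (LinearMap.det ((2 : K) • J + 1))]

theorem even_finrank_ker_sq_add_self_add_one (f : End K V) :
    Even (finrank K (ker (f ^ 2 + f + 1))) := by
  have hcomm : Commute f (f ^ 2 + f + 1) :=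
    ((Commute.self_pow f 2).add_right (Commute.refl f)).add_right (Commute.one_right f)
  have hmaps : ∀ x ∈ ker (f ^ 2 + f + 1), f x ∈ ker (f ^ 2 + f + 1) := by
    intro x hx
    rw [mem_ker] at hx ⊢
    rw [← mul_apply, ← hcomm.eq, mul_apply, hx, map_zero]
  apply even_finrank_of_sq_add_self_add_one_eq_zero (J := f.restrict hmaps)
  ext ⟨x, hx⟩
  simpa [pow_two] using hx

end OrderedField

variable {V : Type*} [AddCommGroup V] [Module ℚ V] [FiniteDimensional ℚ V]

theorem finrank_ker_sub_one_add_finrank_ker_sq_add_self_add_one {f : End ℚ V} (hf : f ^ 3 = 1) :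
    finrank ℚ (ker (f - 1)) + finrank ℚ (ker (f ^ 2 + f + 1)) = finrank ℚ V := by
  have hcop : IsCoprime (X - 1 : ℚ[X]) (X ^ 2 + X + 1) := by
    simpa [cyclotomic_three] using cyclotomic.isCoprime_rat (show 1 ≠ 3 by norm_num)
  have hsup := sup_ker_aeval_eq_ker_aeval_mul_of_coprime f hcop
  rw [show (X - 1 : ℚ[X]) * (X ^ 2 + X + 1) = X ^ 3 - 1 by ring] at hsup
  simp only [map_sub, map_add, map_pow, map_one, aeval_X, hf, sub_self, ker_zero] at hsup
  have hdisj := disjoint_ker_aeval_of_isCoprime f hcop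
  simp only [map_sub, map_add, map_pow, map_one, aeval_X] at hdisj
  rw [← Submodule.finrank_sup_add_finrank_inf_eq, hsup, hdisj.eq_bot, finrank_bot, add_zero,
    finrank_top]

theorem finrank_ker_sub_one_eq_two (hV : finrank ℚ V = 4) {f : End ℚ V} (hf : f ^ 3 = 1)
    (hf1 : f ≠ 1) (hfix : ker (f - 1) ≠ ⊥) : finrank ℚ (ker (f - 1)) = 2 := by
  have hsum := finrank_ker_sub_one_add_finrank_ker_sq_add_self_add_one hf
  obtain ⟨k, hk⟩ := even_finrank_ker_sq_add_self_add_one f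
  have hpos : finrank ℚ (ker (f - 1)) ≠ 0 := fun h ↦ hfix (Submodule.finrank_eq_zero.mp h)
  have hne : finrank ℚ (ker (f - 1)) ≠ finrank ℚ V := fun h ↦
    hf1 (sub_eq_zero.mp (ker_eq_top.mp (Submodule.eq_top_of_finrank_eq h)))
  omega

end Module.End

theorem cyclotomic_dvd_minpoly_of_pow_eq_one {A : Type*} [Ring A] [Algebra ℚ A] {p : ℕ}
    (hp : p.Prime) {x : A} (hx : x ^ p = 1) (hx1 : x ≠ 1) : cyclotomic p ℚ ∣ minpoly ℚ x := by
  have := Fact.mk hp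
  have hdvd : minpoly ℚ x ∣ cyclotomic p ℚ * (X - 1) :=
    minpoly.dvd ℚ x (by simp [cyclotomic_prime_mul_X_sub_one, hx])
  by_contra hndvd
  obtain ⟨q, hq⟩ := ((cyclotomic.irreducible_rat hp.pos).coprime_iff_not_dvd.2
    hndvd).symm.dvd_of_dvd_mul_left hdvd
  have hx_root : aeval x (X - 1 : ℚ[X]) = 0 := by rw [hq, map_mul, minpoly.aeval, zero_mul]
  exact hx1 (by simpa [sub_eq_zero] using hx_root)

namespace Matrix

variable {n : Type*} [Fintype n] [DecidableEq n]

theorem X_sub_C_dvd_charpoly {R : Type*} [CommRing R] [IsDomain R] {M : Matrix n n R} {μ : R}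
    {v : n → R} (hv : v ≠ 0) (hMv : M *ᵥ v = μ • v) : X - C μ ∣ M.charpoly := by
  rw [dvd_iff_isRoot, IsRoot, eval_charpoly, ← exists_mulVec_eq_zero_iff]
  exact ⟨v, hv, by simp [sub_mulVec, hMv]⟩

theorem X_pow_sub_one_dvd_charpoly {p : ℕ} (hp : p.Prime) {M : Matrix n n ℚ} (hM : M ^ p = 1)
    (hM1 : M ≠ 1) {v : n → ℚ} (hv : v ≠ 0) (hMv : M *ᵥ v = v) : X ^ p - 1 ∣ M.charpoly := by
  have := Fact.mk hp
  have hfix : X - 1 ∣ M.charpoly := by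
    simpa using X_sub_C_dvd_charpoly hv (μ := 1) (by simpa using hMv)
  have hcop : IsCoprime (X - 1 : ℚ[X]) (cyclotomic p ℚ) := by
    simpa using cyclotomic.isCoprime_rat hp.one_lt.ne
  rw [← cyclotomic_prime_mul_X_sub_one, mul_comm]
  exact hcop.mul_dvd hfix
    ((cyclotomic_dvd_minpoly_of_pow_eq_one hp hM hM1).trans (minpoly.dvd ℚ M M.aeval_self_charpoly))

theorem le_card_of_X_pow_sub_one_dvd_charpoly {K : Type*} [Field K] {M : Matrix n n K} {p : ℕ}
    (hdvd : X ^ p - 1 ∣ M.charpoly) : p ≤ Fintype.card n := by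
  rw [← M.charpoly_natDegree_eq_dim, ← natDegree_X_pow_sub_C (n := p) (r := (1 : K)), C_1]
  exact natDegree_le_of_dvd hdvd M.charpoly_monic.ne_zero

theorem charpoly_eq_X_pow_sub_one_mul_X_sub_one {p : ℕ} (hp : Odd p)
    (hn : Fintype.card n = p + 1) {M : Matrix n n ℚ} (hM : M ^ p = 1)
    (hdvd : X ^ p - 1 ∣ M.charpoly) : M.charpoly = (X ^ p - 1) * (X - 1) := by
  obtain ⟨q, hq⟩ := hdvd
  have hmonic : (X ^ p - 1 : ℚ[X]).Monic := by simpa using monic_X_pow_sub_C (1 : ℚ) hp.pos.ne'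
  have hdeg : (X ^ p - 1 : ℚ[X]).natDegree = p := by
    simpa using natDegree_X_pow_sub_C (r := (1 : ℚ))
  have hq_monic : q.Monic := hmonic.of_mul_monic_left (hq ▸ M.charpoly_monic)
  have hq_deg : q.natDegree = 1 := by
    have := M.charpoly_natDegree_eq_dim
    rw [hq, hmonic.natDegree_mul hq_monic, hdeg, hn] at this
    omega
  have hdet : M.det = 1 := by
    have : M.det ^ p = 1 := by rw [← det_pow, hM, det_one]
    exact ((pow_eq_one_iff_of_ne_zero hp.pos.ne').1 this).resolve_right
      fun h ↦ Nat.not_even_iff_odd.2 hp h.2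
  have hcoeff := det_eq_sign_charpoly_coeff M
  rw [hdet, hn, hp.add_one.neg_one_pow, one_mul, hq, hq_monic.eq_X_add_C hq_deg] at hcoeff
  simp only [mul_coeff_zero, coeff_sub, coeff_X_pow, hp.pos.ne, ↓reduceIte, coeff_one_zero,
    zero_sub, coeff_add, coeff_X_zero, coeff_C_zero, zero_add, neg_mul, one_mul] at hcoeff
  rw [hq, hq_monic.eq_X_add_C hq_deg, show q.coeff 0 = -1 by linarith, C_neg, C_1, ← sub_eq_add_neg]

theorem finrank_ker_toLin'_sub_one_eq_two (hn : Fintype.card n = 4) {M : Matrix n n ℚ}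
    (hM : M ^ 3 = 1) (hM1 : M ≠ 1) {v : n → ℚ} (hv : v ≠ 0) (hMv : M *ᵥ v = v) :
    finrank ℚ (ker (toLin' M - 1)) = 2 := by
  apply Module.End.finrank_ker_sub_one_eq_two (by simpa using hn)
  · rw [← toLin'_pow, hM, toLin'_one, Module.End.one_eq_id]
  · exact fun h ↦ hM1 (toLin'.injective (by rw [h, toLin'_one, Module.End.one_eq_id]))
  · exact (Submodule.ne_bot_iff _).2 ⟨v, by simp [hMv], hv⟩

end Matrix

/-- If `g ∈ GL(4, ℤ)` has odd prime order `p` and fixes a nonzero vector, then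
`p = 3`, the characteristic polynomial of `g` is `(X − 1)²·(X² + X + 1)`, and
the fixed subspace of `g` in `ℚ⁴` has dimension 2. -/
theorem stmt_17 (p : ℕ) (hp : p.Prime) (hp3 : 3 ≤ p)
    (g : GL (Fin 4) ℤ) (hord : orderOf g = p)
    (hfix : ∃ v : Fin 4 → ℤ, v ≠ 0 ∧
      (g : Matrix (Fin 4) (Fin 4) ℤ).mulVec v = v) :
    p = 3 ∧
    (g : Matrix (Fin 4) (Fin 4) ℤ).charpoly = (X - 1) ^ 2 * (X ^ 2 + X + 1) ∧
    Module.finrank ℚ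
      (LinearMap.ker
        (Matrix.toLin' ((g : Matrix (Fin 4) (Fin 4) ℤ).map ((↑) : ℤ → ℚ)) -
          LinearMap.id)) = 2 := by
  obtain ⟨v, hv, hgv⟩ := hfix
  set M : Matrix (Fin 4) (Fin 4) ℚ := (g : Matrix (Fin 4) (Fin 4) ℤ).map ((↑) : ℤ → ℚ)
  have hg1 : g ≠ 1 := by
    rintro rfl
    rw [orderOf_one] at hord
    omega
  have hgp : (g : Matrix (Fin 4) (Fin 4) ℤ) ^ p = 1 := by
    rw [← Units.val_pow_eq_pow_val, ← hord, pow_orderOf_eq_one, Units.val_one]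
  have hM : M ^ p = 1 := by
    simpa [hgp] using (Matrix.map_pow (g : Matrix (Fin 4) (Fin 4) ℤ) (Int.castRingHom ℚ) p).symm
  have hM1 : M ≠ 1 := fun h ↦ hg1 <| Units.ext <| Matrix.map_injective Int.cast_injective <|
    h.trans (Matrix.map_one _ Int.cast_zero Int.cast_one).symm
  have hv' : ((↑) ∘ v : Fin 4 → ℚ) ≠ 0 := by simpa using Int.cast_injective.comp_left.ne hv
  have hMv : M *ᵥ ((↑) ∘ v) = (↑) ∘ v := funext fun i ↦ by
    have := (Int.castRingHom ℚ).map_mulVec (g : Matrix (Fin 4) (Fin 4) ℤ) v i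
    rw [hgv] at this
    exact this.symm
  have hdvd := Matrix.X_pow_sub_one_dvd_charpoly hp hM hM1 hv' hMv
  obtain rfl : p = 3 := by
    have hp4 : p ≤ 4 := by simpa using Matrix.le_card_of_X_pow_sub_one_dvd_charpoly hdvd
    interval_cases p
    · rfl
    · norm_num at hp
  have hcharpoly : M.charpoly = (X - 1) ^ 2 * (X ^ 2 + X + 1) := by
    rw [Matrix.charpoly_eq_X_pow_sub_one_mul_X_sub_one (by decide) (by simp) hM hdvd]
    ring
  refine ⟨rfl, map_injective (Int.castRingHom ℚ) Int.cast_injective ?_, ?_⟩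
  · simpa [← Matrix.charpoly_map] using hcharpoly
  · rw [← Module.End.one_eq_id]
    exact Matrix.finrank_ker_toLin'_sub_one_eq_two (by simp) hM hM1 hv' hMv
end
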